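/- The bilinear map ω on the Witt algebra defined by ω(l_n,l_m) = 0 for n,m odd, ω(l_n,l_m) = 3(m−n) l_{n+m−2} for n,m even, and ω(l_n,l_m) = 3(m−n−1) l_{n+m−2} for n odd and m even (extended skew-symmetrically), is a 2-cocycle of the Witt algebra with values in its adjoint module: d₂ω = 0, i.e. the cyclic sum ω([l_n,l_m], l_k) − [l_n, ω(l_m,l_k)] + (cyclic) vanishes. -/

import Mathlib

noncomputable section

/-- Bilinear extension of structure constants `C` to a bracket on `ℤ →₀ ℂ`. -/
def br (C : ℤ → ℤ → (ℤ →₀ ℂ)) (x y : ℤ →₀ ℂ) : ℤ →₀ ℂ :=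
  x.sum fun n a => y.sum fun m b => (a * b) • C n m

/-- Structure constants of the Witt algebra: `[l_n, l_m] = (m - n) l_{n+m}`. -/
def wittC (n m : ℤ) : ℤ →₀ ℂ := Finsupp.single (n + m) ((m : ℂ) - (n : ℂ))

/-- The cochain `ω`: `0` for `n,m` odd, `3(m-n) l_{n+m-2}` for `n,m` even,
`3(m-n-1) l_{n+m-2}` for `n` odd, `m` even, extended skew-symmetrically. -/
def omC (n m : ℤ) : ℤ →₀ ℂ :=
  if Odd n then
    if Odd m then 0
    else Finsupp.single (n + m - 2) (3 * ((m : ℂ) - n - 1))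
  else
    if Odd m then -Finsupp.single (n + m - 2) (3 * ((n : ℂ) - m - 1))
    else Finsupp.single (n + m - 2) (3 * ((m : ℂ) - n))

/-!
Both brackets are homogeneous: `[l_n, l_m]` is a multiple of `l_{n+m}` and `ω(l_n, l_m)` one of
`l_{n+m-2}`. Since `d₂ω` is trilinear and invariant under cyclic permutation of its arguments, it
suffices to evaluate it on basis triples `(l_n, l_m, l_k)`, where it is a multiple of `l_{n+m+k-2}`.
Its coefficient is a polynomial identity in `n, m, k` once their parities are fixed, and these
determine the parities of `n + m`, `m + k` and `n + k` on which `ω` depends.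
-/

section Bracket

variable (C : ℤ → ℤ → (ℤ →₀ ℂ))

lemma br_add_left (x x' y : ℤ →₀ ℂ) : br C (x + x') y = br C x y + br C x' y := by
  unfold br
  rw [Finsupp.sum_add_index] <;> intros <;> simp [add_mul, add_smul, Finsupp.sum_add]

lemma br_add_right (x y y' : ℤ →₀ ℂ) : br C x (y + y') = br C x y + br C x y' := by
  unfold br
  rw [← Finsupp.sum_add]
  refine Finsupp.sum_congr fun n _ => ?_
  rw [Finsupp.sum_add_index] <;> intros <;> simp [mul_add, add_smul]

lemma br_smul_left (c : ℂ) (x y : ℤ →₀ ℂ) : br C (c • x) y = c • br C x y := by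
  unfold br
  rw [Finsupp.sum_smul_index, Finsupp.smul_sum] <;> intros <;>
    simp [mul_assoc, mul_smul, Finsupp.smul_sum]

lemma br_smul_right (c : ℂ) (x y : ℤ →₀ ℂ) : br C x (c • y) = c • br C x y := by
  unfold br
  rw [Finsupp.smul_sum]
  refine Finsupp.sum_congr fun n _ => ?_
  rw [Finsupp.sum_smul_index, Finsupp.smul_sum] <;> intros <;> simp [mul_smul, mul_left_comm]

lemma br_single_single (n m : ℤ) (a b : ℂ) :
    br C (Finsupp.single n a) (Finsupp.single m b) = (a * b) • C n m := by
  unfold br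
  rw [Finsupp.sum_single_index, Finsupp.sum_single_index] <;> simp

end Bracket

section Differential

variable (C Ω : ℤ → ℤ → (ℤ →₀ ℂ))

def cocycleDiff (x y z : ℤ →₀ ℂ) : ℤ →₀ ℂ :=
  br Ω (br C x y) z + br Ω (br C y z) x + br Ω (br C z x) y
    - br C x (br Ω y z) - br C y (br Ω z x) - br C z (br Ω x y)

lemma cocycleDiff_rotate (x y z : ℤ →₀ ℂ) :
    cocycleDiff C Ω x y z = cocycleDiff C Ω y z x := by
  unfold cocycleDiff
  abel

lemma cocycleDiff_add_left (x x' y z : ℤ →₀ ℂ) :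
    cocycleDiff C Ω (x + x') y z = cocycleDiff C Ω x y z + cocycleDiff C Ω x' y z := by
  simp only [cocycleDiff, br_add_left, br_add_right]
  abel

lemma cocycleDiff_smul_left (c : ℂ) (x y z : ℤ →₀ ℂ) :
    cocycleDiff C Ω (c • x) y z = c • cocycleDiff C Ω x y z := by
  simp only [cocycleDiff, br_smul_left, br_smul_right, smul_add, smul_sub]

lemma cocycleDiff_eq_zero_of_single_left {y z : ℤ →₀ ℂ}
    (h : ∀ n, cocycleDiff C Ω (Finsupp.single n 1) y z = 0) (x : ℤ →₀ ℂ) :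
    cocycleDiff C Ω x y z = 0 := by
  induction x using Finsupp.induction_linear with
  | zero => simpa using cocycleDiff_smul_left C Ω 0 0 y z
  | add u v hu hv => rw [cocycleDiff_add_left, hu, hv, add_zero]
  | single n a =>
    rw [← mul_one a, ← smul_eq_mul, ← Finsupp.smul_single, cocycleDiff_smul_left, h,
      smul_zero]

lemma cocycleDiff_eq_zero_of_single
    (h : ∀ n m k,
      cocycleDiff C Ω (Finsupp.single n 1) (Finsupp.single m 1) (Finsupp.single k 1) = 0)
    (x y z : ℤ →₀ ℂ) : cocycleDiff C Ω x y z = 0 := by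
  refine cocycleDiff_eq_zero_of_single_left C Ω (fun n => ?_) x
  rw [cocycleDiff_rotate]
  refine cocycleDiff_eq_zero_of_single_left C Ω (fun m => ?_) y
  rw [cocycleDiff_rotate]
  exact cocycleDiff_eq_zero_of_single_left C Ω (fun k => h k n m) z

end Differential

def omCoeff (n m : ℤ) : ℂ :=
  if Odd n then
    if Odd m then 0 else 3 * ((m : ℂ) - n - 1)
  else
    if Odd m then -(3 * ((n : ℂ) - m - 1)) else 3 * ((m : ℂ) - n)

lemma omC_eq_single (n m : ℤ) : omC n m = Finsupp.single (n + m - 2) (omCoeff n m) := by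
  unfold omC omCoeff
  split_ifs <;> simp [Finsupp.single_neg]

lemma omCoeff_cocycle (n m k : ℤ) :
    (m - n : ℂ) * omCoeff (n + m) k + (k - m) * omCoeff (m + k) n + (n - k) * omCoeff (n + k) m
      - (m + k - 2 - n) * omCoeff m k - (k + n - 2 - m) * omCoeff k n
      - (n + m - 2 - k) * omCoeff n m = 0 := by
  simp only [omCoeff, ← Int.not_even_iff_odd, Int.even_add]
  by_cases hn : Even n <;> by_cases hm : Even m <;> by_cases hk : Even k <;>
    simp [hn, hm, hk] <;> ring

lemma br_wittC_single (n m : ℤ) (a b : ℂ) :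
    br wittC (Finsupp.single n a) (Finsupp.single m b)
      = Finsupp.single (n + m) (a * b * ((m : ℂ) - n)) := by
  rw [br_single_single, wittC, Finsupp.smul_single, smul_eq_mul]

lemma br_omC_single (n m : ℤ) (a b : ℂ) :
    br omC (Finsupp.single n a) (Finsupp.single m b)
      = Finsupp.single (n + m - 2) (a * b * omCoeff n m) := by
  rw [br_single_single, omC_eq_single, Finsupp.smul_single, smul_eq_mul]

lemma cocycleDiff_wittC_omC_single (n m k : ℤ) :
    cocycleDiff wittC omC (Finsupp.single n 1) (Finsupp.single m 1) (Finsupp.single k 1) = 0 := by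
  simp only [cocycleDiff, br_wittC_single, br_omC_single, one_mul, mul_one]
  -- `ring_nf` brings all six indices to the same normal form of `n + m + k - 2`.
  ring_nf
  simp only [← Finsupp.single_add, ← Finsupp.single_sub]
  rw [Finsupp.single_eq_zero]
  push_cast
  linear_combination omCoeff_cocycle n m k

/-- `ω` is a 2-cocycle of the Witt algebra with values in the adjoint module: `d₂ω = 0`. -/
theorem omega_is_cocycle (x y z : ℤ →₀ ℂ) :
    br omC (br wittC x y) z + br omC (br wittC y z) x + br omC (br wittC z x) y
      - br wittC x (br omC y z) - br wittC y (br omC z x) - br wittC z (br omC x y) = 0 :=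
  cocycleDiff_eq_zero_of_single wittC omC cocycleDiff_wittC_omC_single x y z
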